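/- arXiv:math/0409606 — 4 statements merged into one kernel-verified Lean document; each statement's English description precedes it below -/
import Mathlib

section
/- Let T be a finite tree and let E denote the set of external (degree-1) nodes of T. Let (e_1,...,e_n) be any ordering of the edges of T. Define β(k) = 1 if both ends of e_k can be joined to some node of E using only edges among e_1,...,e_{k-1}, and β(k) = 0 otherwise. Then the sum of β(k) for k = 1,...,n equals #E − 1; in particular it is independent of the chosen ordering. -/
/-
Add the edges one at a time and watch the number of connected components that contain an
external node. Every edge of a tree is a bridge, so `e_k` joins two different components of the
graph spanned by `e_1, …, e_{k-1}`; that number therefore drops by one exactly when both of those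
components meet `E`, i.e. when `β(k) = 1`, and stays the same otherwise. It starts at `#E` (no
edges) and ends at `1` (the whole connected tree; `0` if `E = ∅`), so `∑ β(k) = #E - 1`.
-/

open scoped Classical
open SimpleGraph Finset

/-- The subgraph spanned by the edges `σ e_i` with `i < k`. -/
noncomputable def prefixGraph {V : Type*} (T : SimpleGraph V) {n : ℕ}
    (σ : Fin n ≃ T.edgeSet) (k : Fin n) : SimpleGraph V :=
  SimpleGraph.fromEdgeSet {e | ∃ i : Fin n, i < k ∧ (σ i : Sym2 V) = e}

namespace Finset

variable {α β : Type*} [DecidableEq β]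

theorem card_image_add_ite_eq_card {f : α → β} {a b : α} (hab : a ≠ b) (hfab : f a = f b)
    (hf : ∀ x y, f x = f y → x = y ∨ s(x, y) = s(a, b)) (S : Finset α) :
    #(S.image f) + (if a ∈ S ∧ b ∈ S then 1 else 0) = #S := by
  have hinj : Set.InjOn f (S.erase b : Set α) := by
    intro x hx y hy hxy
    rcases hf x y hxy with h | h
    · exact h
    · simp only [coe_erase, Set.mem_sdiff, Set.mem_singleton_iff] at hx hy
      rcases Sym2.eq_iff.mp h with ⟨rfl, rfl⟩ | ⟨rfl, rfl⟩
      exacts [absurd rfl hy.2, absurd rfl hx.2]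
  split_ifs with h
  · have himage : S.image f = (S.erase b).image f := by
      refine Subset.antisymm (fun z hz => ?_) (image_subset_image (erase_subset _ _))
      obtain ⟨x, hx, rfl⟩ := mem_image.mp hz
      by_cases hxb : x = b
      · exact mem_image.mpr ⟨a, mem_erase.mpr ⟨hab, h.1⟩, hxb ▸ hfab⟩
      · exact mem_image_of_mem f (mem_erase.mpr ⟨hxb, hx⟩)
    rw [himage, card_image_of_injOn hinj, card_erase_add_one h.2]
  · rw [add_zero, card_image_of_injOn]
    intro x hx y hy hxy
    rcases hf x y hxy with h' | h'
    · exact h'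
    · rcases Sym2.eq_iff.mp h' with ⟨rfl, rfl⟩ | ⟨rfl, rfl⟩
      exacts [absurd ⟨hx, hy⟩ h, absurd ⟨hy, hx⟩ h]

end Finset

namespace SimpleGraph

variable {V : Type*} {G : SimpleGraph V} {a b : V}

theorem Reachable.of_sup_edge {x y : V} (h : (G ⊔ edge a b).Reachable x y) :
    G.Reachable x y ∨ (G.Reachable x a ∧ G.Reachable b y) ∨
      (G.Reachable x b ∧ G.Reachable a y) := by
  obtain ⟨w⟩ := h
  induction w with
  | nil => exact .inl .rfl
  | @cons u v z hadj _ ih =>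
    rcases hadj with hG | hE
    · rcases ih with h | ⟨h, h'⟩ | ⟨h, h'⟩
      exacts [.inl (hG.reachable.trans h), .inr (.inl ⟨hG.reachable.trans h, h'⟩),
        .inr (.inr ⟨hG.reachable.trans h, h'⟩)]
    · rcases ((edge_adj _ _ _ _).mp hE).1 with ⟨rfl, rfl⟩ | ⟨rfl, rfl⟩ <;>
        rcases ih with h | ⟨h, h'⟩ | ⟨h, h'⟩
      exacts [.inr (.inl ⟨.rfl, h⟩), .inl (h.symm.trans h'), .inl h',
        .inr (.inr ⟨.rfl, h⟩), .inl h', .inl (h.symm.trans h')]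

theorem mk_mem_image_connectedComponentMk {L : Finset V} {x : V} :
    G.connectedComponentMk x ∈ L.image G.connectedComponentMk ↔ ∃ y ∈ L, G.Reachable x y := by
  simp only [mem_image, ConnectedComponent.eq, reachable_comm]

theorem card_image_connectedComponentMk_sup_edge_add_ite (h : ¬G.Reachable a b) (L : Finset V) :
    #(L.image (G ⊔ edge a b).connectedComponentMk) +
        (if (∃ y ∈ L, G.Reachable a y) ∧ (∃ y ∈ L, G.Reachable b y) then 1 else 0) =
      #(L.image G.connectedComponentMk) := by
  let φ := ConnectedComponent.map (Hom.ofLE (le_sup_left : G ≤ G ⊔ edge a b))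
  have hφ : ∀ C₁ C₂, φ C₁ = φ C₂ →
      C₁ = C₂ ∨ s(C₁, C₂) = s(G.connectedComponentMk a, G.connectedComponentMk b) := by
    refine ConnectedComponent.ind₂ fun u v huv => ?_
    rcases (ConnectedComponent.exact huv).of_sup_edge with h₁ | ⟨h₁, h₂⟩ | ⟨h₁, h₂⟩
    · exact .inl (ConnectedComponent.sound h₁)
    · exact .inr (Sym2.eq_iff.mpr (.inl ⟨ConnectedComponent.sound h₁,
        ConnectedComponent.sound h₂.symm⟩))
    · exact .inr (Sym2.eq_iff.mpr (.inr ⟨ConnectedComponent.sound h₁,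
        ConnectedComponent.sound h₂.symm⟩))
  have hab : G.connectedComponentMk a ≠ G.connectedComponentMk b :=
    fun h' => h (ConnectedComponent.exact h')
  have hφab : φ (G.connectedComponentMk a) = φ (G.connectedComponentMk b) :=
    ConnectedComponent.sound (Adj.reachable (.inr ((edge_adj a b a b).mpr
      ⟨.inl ⟨rfl, rfl⟩, fun h' => h (h' ▸ .rfl)⟩)))
  have himage : L.image (G ⊔ edge a b).connectedComponentMk =
      (L.image G.connectedComponentMk).image φ := by
    rw [image_image]; rfl
  simp only [himage, ← mk_mem_image_connectedComponentMk]
  exact card_image_add_ite_eq_card hab hφab hφ _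

theorem card_image_connectedComponentMk_bot (L : Finset V) :
    #(L.image (⊥ : SimpleGraph V).connectedComponentMk) = #L :=
  card_image_of_injective L fun _ _ h => reachable_bot.mp (ConnectedComponent.exact h)

theorem Preconnected.card_image_connectedComponentMk (hG : G.Preconnected) (L : Finset V) :
    #(L.image G.connectedComponentMk) = min 1 #L := by
  have := hG.subsingleton_connectedComponent
  rcases L.eq_empty_or_nonempty with rfl | hL
  · simp
  · rw [Nat.min_eq_left (one_le_card.mpr hL)]
    exact le_antisymm (card_le_one_of_subsingleton _) (one_le_card.mpr (hL.image _))

end SimpleGraph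

theorem Fin.add_sum_eq_of_forall_succ_add {n : ℕ} {f : ℕ → ℕ} {g : Fin n → ℕ}
    (h : ∀ k : Fin n, f (k + 1) + g k = f k) : f n + ∑ k, g k = f 0 := by
  induction n with
  | zero => simp
  | succ n ih =>
    have hlast := h (Fin.last n)
    rw [Fin.val_last] at hlast
    rw [Fin.sum_univ_castSucc, add_comm (∑ k : Fin n, _), ← add_assoc, hlast]
    exact ih fun k => h k.castSucc

section FirstEdges

variable {V : Type*} {T : SimpleGraph V} {n : ℕ} (σ : Fin n ≃ T.edgeSet)

/-- `prefixGraph` with a natural-number bound, so that `m = n` (all edges) is allowed. -/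
noncomputable def firstEdgesGraph (m : ℕ) : SimpleGraph V :=
  fromEdgeSet {e | ∃ i : Fin n, (i : ℕ) < m ∧ (σ i : Sym2 V) = e}

theorem prefixGraph_eq_firstEdgesGraph (k : Fin n) : prefixGraph T σ k = firstEdgesGraph σ k :=
  rfl

@[simp]
theorem firstEdgesGraph_zero : firstEdgesGraph σ 0 = ⊥ := by
  simp [firstEdgesGraph]

@[simp]
theorem firstEdgesGraph_self : firstEdgesGraph σ n = T := by
  have hedges : {e | ∃ i : Fin n, (i : ℕ) < n ∧ (σ i : Sym2 V) = e} = T.edgeSet := by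
    ext e
    refine ⟨fun ⟨i, _, he⟩ => he ▸ (σ i).2, fun he => ⟨σ.symm ⟨e, he⟩, Fin.is_lt _, ?_⟩⟩
    rw [Equiv.apply_symm_apply]
  rw [firstEdgesGraph, hedges, fromEdgeSet_edgeSet]

theorem firstEdgesGraph_succ {k : Fin n} {a b : V} (hk : (σ k : Sym2 V) = s(a, b)) :
    firstEdgesGraph σ (k + 1) = firstEdgesGraph σ k ⊔ edge a b := by
  rw [firstEdgesGraph, firstEdgesGraph, edge, ← fromEdgeSet_union, ← hk]
  congr 1
  ext e
  simp only [Set.mem_ofPred_eq, Set.mem_union, Set.mem_singleton_iff, Nat.lt_succ_iff_lt_or_eq,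
    or_and_right, exists_or, ← Fin.ext_iff, exists_eq_left', eq_comm]

theorem firstEdgesGraph_le_deleteEdges (k : Fin n) :
    firstEdgesGraph σ k ≤ T.deleteEdges {(σ k : Sym2 V)} := by
  rw [firstEdgesGraph, fromEdgeSet_le, edgeSet_deleteEdges]
  rintro _ ⟨⟨i, hik, rfl⟩, -⟩
  refine ⟨(σ i).2, fun hi => hik.ne ?_⟩
  exact congrArg Fin.val (σ.injective (Subtype.ext hi))

theorem not_reachable_firstEdgesGraph (hT : T.IsAcyclic) {k : Fin n} {a b : V}
    (hk : (σ k : Sym2 V) = s(a, b)) : ¬(firstEdgesGraph σ k).Reachable a b := by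
  have hbridge : T.IsBridge s(a, b) :=
    isAcyclic_iff_forall_adj_isBridge.mp hT (hk ▸ (σ k).2 : s(a, b) ∈ T.edgeSet)
  exact fun h => isBridge_iff.mp hbridge (hk ▸ h.mono (firstEdgesGraph_le_deleteEdges σ k))

theorem card_image_firstEdgesGraph_succ_add_ite (hT : T.IsAcyclic) (L : Finset V) (k : Fin n) :
    #(L.image (firstEdgesGraph σ (k + 1)).connectedComponentMk) +
        (if ∀ x ∈ (σ k : Sym2 V), ∃ y ∈ L, (prefixGraph T σ k).Reachable x y then 1 else 0) =
      #(L.image (firstEdgesGraph σ k).connectedComponentMk) := by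
  induction hk : (σ k : Sym2 V) using Sym2.ind with
  | h a b =>
    rw [firstEdgesGraph_succ σ hk, Sym2.forall_mem_pair, prefixGraph_eq_firstEdgesGraph]
    -- the two `if`s differ only in their `Decidable` instances
    convert card_image_connectedComponentMk_sup_edge_add_ite
      (not_reachable_firstEdgesGraph σ hT hk) L

end FirstEdges

theorem sum_beta_eq_card_leaves_sub_one_general {V : Type*} [Fintype V]
    (T : SimpleGraph V) (hT : T.IsTree) (n : ℕ)
    (σ : Fin n ≃ T.edgeSet) :
    (∑ k : Fin n, if (∀ x ∈ (σ k : Sym2 V), ∃ y, T.degree y = 1 ∧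
          (prefixGraph T σ k).Reachable x y) then 1 else 0)
      = (Finset.univ.filter (fun v => T.degree v = 1)).card - 1 := by
  have htelescope := Fin.add_sum_eq_of_forall_succ_add
    (f := fun m => #((univ.filter fun v => T.degree v = 1).image
      (firstEdgesGraph σ m).connectedComponentMk))
    (card_image_firstEdgesGraph_succ_add_ite σ hT.isAcyclic (univ.filter fun v => T.degree v = 1))
  simp only [mem_filter, mem_univ, true_and] at htelescope
  rw [firstEdgesGraph_self, firstEdgesGraph_zero, card_image_connectedComponentMk_bot,
    hT.connected.preconnected.card_image_connectedComponentMk] at htelescope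
  omega

/-- Massuyeau's lemma: let `T` be a finite tree with at least one edge, let `E` be
its set of external (degree-1) nodes, and let `σ = (e_1, …, e_n)` be an ordering of
the edges of `T`.  Set `β(k) = 1` if both ends of `e_k` can be joined to `E` using
only the edges `e_1, …, e_{k-1}` (length-0 paths allowed), and `β(k) = 0` otherwise.
Then `∑ β(k) = #E - 1`; in particular the sum does not depend on the ordering. -/
theorem sum_beta_eq_card_leaves_sub_one {V : Type*} [Fintype V]
    (T : SimpleGraph V) (hT : T.IsTree) (n : ℕ) (hn : 1 ≤ n)
    (σ : Fin n ≃ T.edgeSet) :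
    (∑ k : Fin n, if (∀ x ∈ (σ k : Sym2 V), ∃ y, T.degree y = 1 ∧
          (prefixGraph T σ k).Reachable x y) then 1 else 0)
      = (Finset.univ.filter (fun v => T.degree v = 1)).card - 1 :=
  sum_beta_eq_card_leaves_sub_one_general T hT n σ
end

section
/- Let T be a finite tree, let N ⊆ V(T) be a set of vertices, and let (e_1,...,e_n) be an ordering of the edges of T. Define α(k) = 0 if both ends of e_k can be joined to nodes of N using only edges among e_1,...,e_{k-1}, and α(k) = 1 otherwise. Then the sum of α(k) over k = 1,...,n is independent of the ordering (e_1,...,e_n). -/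
open scoped Classical
open SimpleGraph Finset

/-- `∑ α(k)` for the edge ordering `σ`, where `α(k) = 0` if both ends of the
`k`-th edge can be joined to the set `N` using only earlier edges (length-0
paths allowed), and `α(k) = 1` otherwise. -/
noncomputable def alphaSum {V : Type*} [Fintype V] (T : SimpleGraph V)
    (N : Set V) {n : ℕ} (σ : Fin n ≃ T.edgeSet) : ℕ :=
  ∑ k : Fin n, if (∀ x ∈ (σ k : Sym2 V), ∃ y ∈ N,
      (prefixGraph T σ k).Reachable x y) then 0 else 1

/-!
Let `c(G)` count the connected components of `G` that meet `N`, and let `G_k` be the graph of the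
edges `e_i` with `i < k`. Since `T` is acyclic, `e_k` joins two different components of `G_k`, and
adding it lowers `c` by one exactly when both of them meet `N`, that is, exactly when `α(k) = 0`.
So `α(k) + c(G_k) = 1 + c(G_{k+1})`, and summing over `k` gives `∑ α(k) + c(⊥) = n + c(T)`,
whose right-hand side and second summand do not depend on the ordering.
-/

theorem Fin.sum_add_eq_nsmul_add_of_forall_add_eq {M : Type*} [AddCommMonoid M] {n : ℕ}
    (a : Fin n → M) (c : ℕ → M) (b : M) (h : ∀ k : Fin n, a k + c k = b + c (k + 1)) :
    ∑ k, a k + c 0 = n • b + c n := by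
  induction n with
  | zero => simp
  | succ n ih =>
    have hlast : a (Fin.last n) + c n = b + c (n + 1) := h (Fin.last n)
    rw [Fin.sum_univ_castSucc, add_right_comm, ih _ fun k ↦ h k.castSucc, add_assoc,
      add_comm (c n), hlast, succ_nsmul, add_assoc]

namespace SimpleGraph

variable {V : Type*} {G : SimpleGraph V} {u v : V}

theorem reachable_sup_edge_iff {x y : V} :
    (G ⊔ edge u v).Reachable x y ↔
      G.Reachable x y ∨ G.Reachable x u ∧ G.Reachable v y ∨ G.Reachable x v ∧ G.Reachable u y := by
  constructor
  · rintro ⟨w⟩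
    induction w with
    | nil => exact .inl .rfl
    | @cons a b c hab _ ih =>
      rcases hab with hab | hab
      · have hab := hab.reachable
        rcases ih with h | ⟨h₁, h₂⟩ | ⟨h₁, h₂⟩
        · exact .inl (hab.trans h)
        · exact .inr (.inl ⟨hab.trans h₁, h₂⟩)
        · exact .inr (.inr ⟨hab.trans h₁, h₂⟩)
      · obtain ⟨⟨rfl, rfl⟩ | ⟨rfl, rfl⟩, -⟩ := (edge_adj ..).1 hab
        · rcases ih with h | ⟨-, h⟩ | ⟨-, h⟩
          exacts [.inr (.inl ⟨.rfl, h⟩), .inr (.inl ⟨.rfl, h⟩), .inl h]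
        · rcases ih with h | ⟨-, h⟩ | ⟨-, h⟩
          exacts [.inr (.inr ⟨.rfl, h⟩), .inl h, .inr (.inr ⟨.rfl, h⟩)]
  · have hle : G ≤ G ⊔ edge u v := le_sup_left
    have huv : (G ⊔ edge u v).Reachable u v := by
      by_cases h : u = v
      · exact h ▸ .rfl
      · exact Adj.reachable (.inr ((edge_adj ..).2 ⟨.inl ⟨rfl, rfl⟩, h⟩))
    rintro (h | ⟨h₁, h₂⟩ | ⟨h₁, h₂⟩)
    · exact h.mono hle
    · exact ((h₁.mono hle).trans huv).trans (h₂.mono hle)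
    · exact ((h₁.mono hle).trans huv.symm).trans (h₂.mono hle)

noncomputable def numComponentsMeeting (G : SimpleGraph V) (N : Set V) : ℕ :=
  (G.connectedComponentMk '' N).ncard

section SupEdge

variable (N : Set V)

private theorem connectedComponentMk_sup_edge_eq_iff {x y : V} :
    (G ⊔ edge u v).connectedComponentMk x = (G ⊔ edge u v).connectedComponentMk y ↔
      G.Reachable x y ∨ G.Reachable x u ∧ G.Reachable v y ∨ G.Reachable x v ∧ G.Reachable u y :=
  ConnectedComponent.eq.trans reachable_sup_edge_iff

private theorem connectedComponentMk_sup_edge_image :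
    (G ⊔ edge u v).connectedComponentMk '' N =
      ConnectedComponent.map (Hom.ofLE le_sup_left) '' (G.connectedComponentMk '' N) := by
  rw [Set.image_image]; rfl

theorem numComponentsMeeting_sup_edge_of_not_and
    (h : ¬((∃ a ∈ N, G.Reachable u a) ∧ ∃ b ∈ N, G.Reachable v b)) :
    (G ⊔ edge u v).numComponentsMeeting N = G.numComponentsMeeting N := by
  rw [numComponentsMeeting, numComponentsMeeting, connectedComponentMk_sup_edge_image]
  refine Set.InjOn.ncard_image ?_
  rintro _ ⟨x, hx, rfl⟩ _ ⟨y, hy, rfl⟩ hxy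
  rcases connectedComponentMk_sup_edge_eq_iff.1 hxy with hxy | ⟨hxu, hvy⟩ | ⟨hxv, huy⟩
  · exact ConnectedComponent.sound hxy
  · exact (h ⟨⟨x, hx, hxu.symm⟩, y, hy, hvy⟩).elim
  · exact (h ⟨⟨y, hy, huy⟩, x, hx, hxv.symm⟩).elim

theorem numComponentsMeeting_sup_edge_add_one [Finite V] (huv : ¬G.Reachable u v)
    {a b : V} (ha : a ∈ N) (hua : G.Reachable u a) (hb : b ∈ N) (hvb : G.Reachable v b) :
    (G ⊔ edge u v).numComponentsMeeting N + 1 = G.numComponentsMeeting N := by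
  set φ := ConnectedComponent.map (Hom.ofLE (le_sup_left : G ≤ G ⊔ edge u v))
  set S := G.connectedComponentMk '' N
  have hbS : G.connectedComponentMk b ∈ S := ⟨b, hb, rfl⟩
  have hab : G.connectedComponentMk a ≠ G.connectedComponentMk b := fun h ↦
    huv ((hua.trans (ConnectedComponent.eq.1 h)).trans hvb.symm)
  have himage : φ '' S = φ '' (S \ {G.connectedComponentMk b}) := by
    refine (Set.image_mono Set.sdiff_subset).antisymm' ?_
    rintro _ ⟨_, ⟨c, hc, rfl⟩, rfl⟩
    by_cases hcb : G.connectedComponentMk c = G.connectedComponentMk b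
    · refine ⟨G.connectedComponentMk a, ⟨⟨a, ha, rfl⟩, hab⟩, ?_⟩
      exact connectedComponentMk_sup_edge_eq_iff.2
        (.inr (.inl ⟨hua.symm, hvb.trans (ConnectedComponent.eq.1 hcb).symm⟩))
    · exact ⟨_, ⟨⟨c, hc, rfl⟩, hcb⟩, rfl⟩
  have hinj : Set.InjOn φ (S \ {G.connectedComponentMk b}) := by
    rintro _ ⟨⟨x, hx, rfl⟩, hxb⟩ _ ⟨⟨y, hy, rfl⟩, hyb⟩ hxy
    rcases connectedComponentMk_sup_edge_eq_iff.1 hxy with hxy | ⟨-, hvy⟩ | ⟨hxv, -⟩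
    · exact ConnectedComponent.sound hxy
    · exact (hyb (ConnectedComponent.sound (hvy.symm.trans hvb))).elim
    · exact (hxb (ConnectedComponent.sound (hxv.trans hvb))).elim
  rw [numComponentsMeeting, numComponentsMeeting, connectedComponentMk_sup_edge_image, himage,
    hinj.ncard_image, Set.ncard_sdiff_singleton_add_one hbS (Set.toFinite S)]

theorem ite_add_numComponentsMeeting_sup_edge [Finite V]
    [Decidable ((∃ a ∈ N, G.Reachable u a) ∧ ∃ b ∈ N, G.Reachable v b)] (huv : ¬G.Reachable u v) :
    (if (∃ a ∈ N, G.Reachable u a) ∧ ∃ b ∈ N, G.Reachable v b then 0 else 1) +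
      G.numComponentsMeeting N = 1 + (G ⊔ edge u v).numComponentsMeeting N := by
  split_ifs with h
  · obtain ⟨⟨a, ha, hua⟩, b, hb, hvb⟩ := h
    rw [← numComponentsMeeting_sup_edge_add_one N huv ha hua hb hvb]
    ac_rfl
  · rw [numComponentsMeeting_sup_edge_of_not_and N h]

end SupEdge

noncomputable def edgePrefix {n : ℕ} (e : Fin n → Sym2 V) (k : ℕ) : SimpleGraph V :=
  fromEdgeSet {f | ∃ i : Fin n, (i : ℕ) < k ∧ e i = f}

section EdgePrefix

variable {n : ℕ} (e : Fin n → Sym2 V)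

theorem edgePrefix_zero : edgePrefix e 0 = ⊥ := by
  simp [edgePrefix]

theorem edgePrefix_self : edgePrefix e n = fromEdgeSet (Set.range e) := by
  simp [edgePrefix, Set.range]

theorem edgePrefix_succ (k : Fin n) :
    edgePrefix e (k + 1) = edgePrefix e k ⊔ fromEdgeSet {e k} := by
  rw [edgePrefix, edgePrefix, ← fromEdgeSet_union]
  congr 1
  ext f
  simp only [Set.mem_ofPred_eq, Set.mem_union, Set.mem_singleton_iff, Nat.lt_succ_iff_lt_or_eq,
    or_and_right, exists_or, Fin.val_inj, exists_eq_left', eq_comm]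

theorem edgePrefix_le_deleteEdges (he : Function.Injective e) (heT : Set.range e ⊆ G.edgeSet)
    (k : Fin n) : edgePrefix e k ≤ G.deleteEdges {e k} := by
  rw [edgePrefix, ← fromEdgeSet_edgeSet (G.deleteEdges {e k}), edgeSet_deleteEdges]
  refine fromEdgeSet_mono ?_
  rintro _ ⟨i, hik, rfl⟩
  exact ⟨heT ⟨i, rfl⟩, fun h ↦ hik.ne (congrArg Fin.val (he h))⟩

theorem not_reachable_edgePrefix (hG : G.IsAcyclic) (he : Function.Injective e)
    (heT : Set.range e ⊆ G.edgeSet) {k : Fin n} (hk : e k = s(u, v)) :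
    ¬(edgePrefix e k).Reachable u v := fun h ↦
  isAcyclic_iff_forall_adj_isBridge.1 hG (heT ⟨k, hk⟩)
    (h.mono (hk ▸ edgePrefix_le_deleteEdges e he heT k))

end EdgePrefix

end SimpleGraph

theorem alphaSum_add_numComponentsMeeting_bot {V : Type*} [Fintype V] {T : SimpleGraph V}
    (hT : T.IsAcyclic) (N : Set V) {n : ℕ} (σ : Fin n ≃ T.edgeSet) :
    alphaSum T N σ + (⊥ : SimpleGraph V).numComponentsMeeting N = n + T.numComponentsMeeting N := by
  set e : Fin n → Sym2 V := fun i ↦ σ i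
  have he : Function.Injective e := Subtype.val_injective.comp σ.injective
  have hrange : Set.range e = T.edgeSet := by
    rw [show e = Subtype.val ∘ σ from rfl, Set.range_comp, σ.range_eq_univ, Set.image_univ,
      Subtype.range_coe]
  have key := Fin.sum_add_eq_nsmul_add_of_forall_add_eq
    (fun k ↦ if ∀ x ∈ (σ k : Sym2 V), ∃ y ∈ N, (prefixGraph T σ k).Reachable x y then 0 else 1)
    (fun k ↦ (edgePrefix e k).numComponentsMeeting N) 1 fun k ↦ ?_
  · rwa [edgePrefix_zero, edgePrefix_self, hrange, fromEdgeSet_edgeSet, smul_eq_mul, mul_one] at key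
  obtain ⟨u, v, hk⟩ : ∃ u v, e k = s(u, v) := ⟨_, _, (e k).out_eq.symm⟩
  have hprefix : prefixGraph T σ k = edgePrefix e k := rfl
  simp only [edgePrefix_succ, hprefix, show (σ k : Sym2 V) = s(u, v) from hk, hk,
    Sym2.forall_mem_pair]
  exact ite_add_numComponentsMeeting_sup_edge N (not_reachable_edgePrefix e hT he hrange.subset hk)

/-- Let `T` be a finite tree, `N` a set of vertices of `T`, and
`(e_1, …, e_n)` an ordering of the edges of `T`.  With `α(k) = 0` iff both ends
of `e_k` can be joined to `N` by edges among `e_1, …, e_{k-1}` only, the sum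
`∑ α(k)` is independent of the chosen ordering. -/
theorem alphaSum_independent_of_ordering {V : Type*} [Fintype V]
    (T : SimpleGraph V) (hT : T.IsTree) (N : Set V)
    (n : ℕ) (σ τ : Fin n ≃ T.edgeSet) :
    alphaSum T N σ = alphaSum T N τ := by
  have hσ := alphaSum_add_numComponentsMeeting_bot hT.isAcyclic N σ
  have hτ := alphaSum_add_numComponentsMeeting_bot hT.isAcyclic N τ
  omega
end

section
/- Let T be a tree with vertex set partitioned into C and N. Blowing up a non-leaf vertex v ∈ N of degree d ≥ 2 into d new degree-1 vertices of N (each incident to one of the d edges formerly at v) yields a forest T' in which, for every ordering of the edges, the sum Σ α(k) (with α defined via reachability to N as before) is unchanged. -/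
open scoped Classical
open SimpleGraph Finset

/-- The image of an edge of `T` under the blow-up of the vertex `v`: an edge
incident to `v` gets transferred to the corresponding new leaf vertex (indexed
by the edge itself), all other edges are unchanged. -/
noncomputable def blowEdge {V : Type*} (T : SimpleGraph V) (v : V)
    (e : T.edgeSet) : Sym2 (V ⊕ T.edgeSet) :=
  if h : v ∈ (e : Sym2 V) then s(Sum.inr e, Sum.inl (Sym2.Mem.other h))
  else Sym2.map Sum.inl (e : Sym2 V)

/-- The blow-up of `T` at the vertex `v`: `v` of degree `d` is replaced by `d`
new degree-1 vertices, one for each edge formerly incident to `v`. -/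
noncomputable def blowUp {V : Type*} (T : SimpleGraph V) (v : V) :
    SimpleGraph (V ⊕ T.edgeSet) :=
  SimpleGraph.fromEdgeSet (Set.range (blowEdge T v))

/-- The set `N` after the blow-up at `v ∈ N`: the old vertices of `N` other than
`v`, together with all the new leaf copies of `v`. -/
def blowN {V : Type*} (T : SimpleGraph V) (v : V) (N : Set V) :
    Set (V ⊕ T.edgeSet) :=
  {x | (∃ a ∈ N, a ≠ v ∧ x = Sum.inl a) ∨
       (∃ e : T.edgeSet, v ∈ (e : Sym2 V) ∧ x = Sum.inr e)}

/-!
Collapsing every new leaf back onto `v` maps the blown-up edges onto the original ones, so it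
is a graph homomorphism from the blown-up graph of any set of edges to the original one and
carries `blowN` into `N`; hence reaching `blowN` in the blow-up implies reaching `N` in `T`.
Conversely, a walk from `a ≠ v` to `N` lifts step by step to the blow-up until it first hits
`v`, and at that moment it has arrived at one of the new leaves, which lie in `blowN`.
Every endpoint of a blown-up edge is either such an `a` or a new leaf, so the conditions
defining `α` agree.
-/

section BlowUp

variable {V : Type*} {T : SimpleGraph V} {v : V}

def blowCollapse (T : SimpleGraph V) (v : V) : V ⊕ T.edgeSet → V :=
  Sum.elim id fun _ => v

theorem map_blowCollapse_blowEdge (e : T.edgeSet) :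
    Sym2.map (blowCollapse T v) (blowEdge T v e) = e := by
  by_cases h : v ∈ (e : Sym2 V)
  · rw [blowEdge, dif_pos h, Sym2.map_mk]
    exact Sym2.other_spec h
  · rw [blowEdge, dif_neg h, Sym2.map_map]
    exact congrFun Sym2.map_id' _

theorem blowEdge_eq_of_ne {a c : V} {e : T.edgeSet} (he : (e : Sym2 V) = s(a, c))
    (ha : a ≠ v) :
    blowEdge T v e = s(Sum.inl a, if c = v then Sum.inr e else Sum.inl c) := by
  split_ifs with hc
  · subst hc
    have hve : c ∈ (e : Sym2 V) := he ▸ Sym2.mem_mk_right a c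
    have hother : Sym2.Mem.other hve = a := by
      rcases Sym2.eq_iff.mp ((Sym2.other_spec hve).trans he) with ⟨hca, -⟩ | ⟨-, h⟩
      exacts [absurd hca.symm ha, h]
    rw [blowEdge, dif_pos hve, hother, Sym2.eq_swap]
  · have hve : v ∉ (e : Sym2 V) := by
      rw [he, Sym2.mem_iff]
      rintro (h | h) <;> [exact ha h.symm; exact hc h.symm]
    rw [blowEdge, dif_neg hve, he, Sym2.map_mk]

theorem ne_of_inl_mem_blowEdge {a : V} {e : T.edgeSet}
    (h : Sum.inl a ∈ blowEdge T v e) : a ≠ v := by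
  have hnd := T.not_isDiag_of_mem_edgeSet e.2
  unfold blowEdge at h
  split_ifs at h with hve
  · rcases Sym2.mem_iff.mp h with h | h
    · cases h
    · exact Sum.inl_injective h ▸ Sym2.other_ne hnd hve
  · obtain ⟨b, hb, hba⟩ := Sym2.mem_map.mp h
    rintro rfl
    exact hve (Sum.inl_injective hba ▸ hb)

theorem mem_of_inr_mem_blowEdge {e e' : T.edgeSet}
    (h : Sum.inr e' ∈ blowEdge T v e) : v ∈ (e' : Sym2 V) := by
  unfold blowEdge at h
  split_ifs at h with hve
  · rcases Sym2.mem_iff.mp h with h | h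
    · exact Sum.inr_injective h ▸ hve
    · cases h
  · obtain ⟨b, -, hb⟩ := Sym2.mem_map.mp h
    cases hb

variable (S : Set T.edgeSet)

def blowCollapseHom :
    fromEdgeSet (blowEdge T v '' S) →g fromEdgeSet (Subtype.val '' S) where
  toFun := blowCollapse T v
  map_rel' {p q} h := by
    obtain ⟨⟨e, heS, hpq⟩, -⟩ := fromEdgeSet_adj _ |>.mp h
    have he : s(blowCollapse T v p, blowCollapse T v q) = e := by
      rw [← Sym2.map_mk, ← hpq, map_blowCollapse_blowEdge]
    refine (fromEdgeSet_adj _).mpr ⟨⟨e, heS, he.symm⟩, fun hpq' => ?_⟩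
    exact T.not_isDiag_of_mem_edgeSet e.2 (he ▸ Sym2.mk_isDiag_iff.mpr hpq')

variable {S}

theorem blowUp_adj_of_adj {a c : V} {e : T.edgeSet} (heS : e ∈ S)
    (he : (e : Sym2 V) = s(a, c)) (ha : a ≠ v) (hac : a ≠ c) :
    (fromEdgeSet (blowEdge T v '' S)).Adj (Sum.inl a)
      (if c = v then Sum.inr e else Sum.inl c) := by
  refine (fromEdgeSet_adj _).mpr ⟨⟨e, heS, blowEdge_eq_of_ne he ha⟩, ?_⟩
  split_ifs <;> simp [hac]

theorem exists_reachable_blowN_of_walk (N : Set V) {a y : V}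
    (w : (fromEdgeSet (Subtype.val '' S)).Walk a y) (ha : a ≠ v) (hy : y ∈ N) :
    ∃ b ∈ blowN T v N, (fromEdgeSet (blowEdge T v '' S)).Reachable (Sum.inl a) b := by
  induction w with
  | nil => exact ⟨_, Or.inl ⟨_, hy, ha, rfl⟩, .refl _⟩
  | @cons a c y hadj w ih =>
    obtain ⟨⟨e, heS, he⟩, hac⟩ := (fromEdgeSet_adj _).mp hadj
    have hstep := blowUp_adj_of_adj heS he ha hac
    by_cases hc : c = v
    · rw [if_pos hc] at hstep
      exact ⟨_, Or.inr ⟨e, hc ▸ he ▸ Sym2.mem_mk_right a c, rfl⟩, hstep.reachable⟩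
    · rw [if_neg hc] at hstep
      obtain ⟨b, hb, hr⟩ := ih hc hy
      exact ⟨b, hb, hstep.reachable.trans hr⟩

theorem exists_reachable_blowN_inl_iff {N : Set V} (hv : v ∈ N) {a : V} (ha : a ≠ v) :
    (∃ b ∈ blowN T v N, (fromEdgeSet (blowEdge T v '' S)).Reachable (Sum.inl a) b) ↔
      ∃ y ∈ N, (fromEdgeSet (Subtype.val '' S)).Reachable a y := by
  refine ⟨?_, fun ⟨y, hy, ⟨w⟩⟩ => exists_reachable_blowN_of_walk N w ha hy⟩
  rintro ⟨b, hb, hr⟩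
  refine ⟨blowCollapse T v b, ?_, hr.map (blowCollapseHom S)⟩
  rcases hb with ⟨a, haN, -, rfl⟩ | ⟨e, -, rfl⟩
  exacts [haN, hv]

theorem forall_mem_blowEdge_reachable_iff {N : Set V} (hv : v ∈ N) (e : T.edgeSet) :
    (∀ x ∈ blowEdge T v e, ∃ b ∈ blowN T v N,
        (fromEdgeSet (blowEdge T v '' S)).Reachable x b) ↔
      ∀ x ∈ (e : Sym2 V), ∃ y ∈ N, (fromEdgeSet (Subtype.val '' S)).Reachable x y := by
  conv_rhs => rw [← map_blowCollapse_blowEdge (v := v) e]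
  simp only [Sym2.mem_map, forall_exists_index, and_imp, forall_apply_eq_imp_iff₂]
  refine forall₂_congr fun x hx => ?_
  cases x with
  | inl a => exact exists_reachable_blowN_inl_iff hv (ne_of_inl_mem_blowEdge hx)
  | inr e' =>
    exact iff_of_true ⟨_, Or.inr ⟨e', mem_of_inr_mem_blowEdge hx, rfl⟩, .refl _⟩
      ⟨v, hv, .refl _⟩

end BlowUp

theorem blowup_preserves_alphaSum_general {V : Type*} [Fintype V]
    (T : SimpleGraph V) (N : Set V)
    (v : V) (hv : v ∈ N)
    (n : ℕ) (σ : Fin n ≃ T.edgeSet) :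
    (∀ k : Fin n,
      (if (∀ x ∈ (σ k : Sym2 V), ∃ y ∈ N,
          (SimpleGraph.fromEdgeSet
            {s | ∃ i : Fin n, i < k ∧ (σ i : Sym2 V) = s}).Reachable x y)
        then (0 : ℕ) else 1)
      = (if (∀ x ∈ blowEdge T v (σ k), ∃ y ∈ blowN T v N,
          (SimpleGraph.fromEdgeSet
            {s | ∃ i : Fin n, i < k ∧ blowEdge T v (σ i) = s}).Reachable x y)
        then (0 : ℕ) else 1)) ∧
    (∑ k : Fin n, if (∀ x ∈ (σ k : Sym2 V), ∃ y ∈ N,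
          (SimpleGraph.fromEdgeSet
            {s | ∃ i : Fin n, i < k ∧ (σ i : Sym2 V) = s}).Reachable x y)
        then (0 : ℕ) else 1)
      = (∑ k : Fin n, if (∀ x ∈ blowEdge T v (σ k), ∃ y ∈ blowN T v N,
          (SimpleGraph.fromEdgeSet
            {s | ∃ i : Fin n, i < k ∧ blowEdge T v (σ i) = s}).Reachable x y)
        then (0 : ℕ) else 1) := by
  have hα (k : Fin n) :=
    (forall_mem_blowEdge_reachable_iff (S := σ '' Set.Iio k) hv (σ k)).symm
  simp only [Set.image_image] at hα
  exact ⟨fun k => if_congr (hα k) rfl rfl, Finset.sum_congr rfl fun k _ => if_congr (hα k) rfl rfl⟩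

/-- Let `T` be a finite tree with vertex partition `C ⊔ N` and let `v ∈ N` be a
non-leaf vertex of degree `d ≥ 2`.  Blowing up `v` into `d` new degree-1
vertices of `N` (each incident to one of the `d` edges formerly at `v`) yields a
forest `T'` in which, for any fixed ordering of the edges (transported via the
canonical bijection of edges), the α-values agree edge-by-edge, and hence the
sums `∑ α(k)` of `T` and `T'` agree.  Here `α(k) = 0` iff both endpoints of the
`k`-th edge are connected to `N` using only earlier edges. -/
theorem blowup_preserves_alphaSum {V : Type*} [Fintype V]
    (T : SimpleGraph V) (hT : T.IsTree) (N : Set V)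
    (v : V) (hv : v ∈ N) (hd : 2 ≤ T.degree v)
    (n : ℕ) (σ : Fin n ≃ T.edgeSet) :
    (∀ k : Fin n,
      (if (∀ x ∈ (σ k : Sym2 V), ∃ y ∈ N,
          (SimpleGraph.fromEdgeSet
            {s | ∃ i : Fin n, i < k ∧ (σ i : Sym2 V) = s}).Reachable x y)
        then (0 : ℕ) else 1)
      = (if (∀ x ∈ blowEdge T v (σ k), ∃ y ∈ blowN T v N,
          (SimpleGraph.fromEdgeSet
            {s | ∃ i : Fin n, i < k ∧ blowEdge T v (σ i) = s}).Reachable x y)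
        then (0 : ℕ) else 1)) ∧
    (∑ k : Fin n, if (∀ x ∈ (σ k : Sym2 V), ∃ y ∈ N,
          (SimpleGraph.fromEdgeSet
            {s | ∃ i : Fin n, i < k ∧ (σ i : Sym2 V) = s}).Reachable x y)
        then (0 : ℕ) else 1)
      = (∑ k : Fin n, if (∀ x ∈ blowEdge T v (σ k), ∃ y ∈ blowN T v N,
          (SimpleGraph.fromEdgeSet
            {s | ∃ i : Fin n, i < k ∧ blowEdge T v (σ i) = s}).Reachable x y)
        then (0 : ℕ) else 1) :=
  blowup_preserves_alphaSum_general T N v hv n σ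
end

section
/- Let T be a finite tree with vertex partition C ⊔ N and let e be an edge with a leaf endpoint in C. Let T' = T − e (deleting e and its leaf endpoint), with the induced partition. Then for any ordering σ of the edges of T, the α-values of the edges other than e computed in T with ordering σ coincide with the α-values computed in T' with the induced ordering; consequently Σ_T α = Σ_{T'} α + 1. -/
open scoped Classical
open SimpleGraph Finset

/-!
The leaf `u` lies on the edge `e` only. Before `e` is added, `u` is isolated, so the endpoint
`u ∉ N` of `e` is not reached and `α(e) = 1`. Every other edge avoids `u`, and a path between
vertices other than `u` never needs the pendant edge `e`: collapsing `u` onto its neighbour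
turns any walk into one avoiding `e`. So adding or removing `e` changes no other α-value.
-/

namespace SimpleGraph

variable {V : Type*}

theorem eq_of_mem_edgeSet_of_degree_eq_one {G : SimpleGraph V} {u : V} {e e' : Sym2 V}
    [Fintype (G.neighborSet u)] (hdeg : G.degree u = 1) (he : e ∈ G.edgeSet)
    (he' : e' ∈ G.edgeSet) (hu : u ∈ e) (hu' : u ∈ e') : e = e' := by
  obtain ⟨w, rfl⟩ := Sym2.mem_iff_exists.mp hu
  obtain ⟨w', rfl⟩ := Sym2.mem_iff_exists.mp hu'
  obtain ⟨_, -, hunique⟩ := degree_eq_one_iff_existsUnique_adj.mp hdeg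
  rw [hunique w he, hunique w' he']

theorem eq_of_reachable_of_forall_not_mem {S : Set (Sym2 V)} {u y : V} (huS : ∀ s ∈ S, u ∉ s)
    (h : (fromEdgeSet S).Reachable u y) : y = u := by
  obtain ⟨p⟩ := h
  cases p with
  | nil => rfl
  | cons hadj _ => exact absurd (Sym2.mem_mk_left _ _) (huS _ (fromEdgeSet_adj S |>.mp hadj).1)

theorem reachable_insert_iff_of_forall_not_mem {S : Set (Sym2 V)} {e : Sym2 V} {u x y : V}
    (hue : u ∈ e) (huS : ∀ s ∈ S, u ∉ s) (hx : x ≠ u) (hy : y ≠ u) :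
    (fromEdgeSet (insert e S)).Reachable x y ↔ (fromEdgeSet S).Reachable x y := by
  refine ⟨fun h => ?_, fun h => h.mono (fromEdgeSet_mono (Set.subset_insert e S))⟩
  obtain ⟨v, rfl⟩ := Sym2.mem_iff_exists.mp hue
  let collapse : V → V := Function.update id u v
  have hcollapse : ∀ a, a ≠ u → collapse a = a := fun a ha => Function.update_of_ne ha v id
  have hstep : ∀ a b, (fromEdgeSet (insert s(u, v) S)).Adj a b →
      Relation.ReflTransGen (fromEdgeSet S).Adj (collapse a) (collapse b) := by
    intro a b hab
    obtain ⟨hmem | hmem, hne⟩ := (fromEdgeSet_adj _).mp hab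
    · have huv : u ≠ v := by
        rintro rfl
        rcases Sym2.eq_iff.mp hmem with ⟨rfl, rfl⟩ | ⟨rfl, rfl⟩ <;> exact hne rfl
      have hcu : collapse u = v := Function.update_self u v id
      have hcv : collapse v = v := hcollapse v huv.symm
      rcases Sym2.eq_iff.mp hmem with ⟨ha, hb⟩ | ⟨ha, hb⟩ <;>
        simp only [ha, hb, hcu, hcv, Relation.ReflTransGen.refl]
    · have ha : a ≠ u := fun h => huS _ hmem (h ▸ Sym2.mem_mk_left a b)
      have hb : b ≠ u := fun h => huS _ hmem (h ▸ Sym2.mem_mk_right a b)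
      rw [hcollapse a ha, hcollapse b hb]
      exact .single ((fromEdgeSet_adj S).mpr ⟨hmem, hne⟩)
  rw [reachable_iff_reflTransGen] at h ⊢
  simpa only [Function.onFun, hcollapse x hx, hcollapse y hy] using
    Relation.ReflTransGen.lift' collapse hstep _ _ h

end SimpleGraph

section EdgeOrdering

variable {V ι : Type*}

def edgesBefore [LT ι] (f : ι → Sym2 V) (k : ι) : Set (Sym2 V) :=
  {s | ∃ m, m < k ∧ f m = s}

/-- `α(f k) = 0` exactly when `IsReached N f k` holds. -/
def IsReached [LT ι] (N : Set V) (f : ι → Sym2 V) (k : ι) : Prop :=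
  ∀ x ∈ f k, ∃ y ∈ N, (fromEdgeSet (edgesBefore f k)).Reachable x y

variable {n : ℕ} {f : Fin (n + 1) → Sym2 V} {j : Fin (n + 1)} {u : V} {N : Set V}

theorem edgesBefore_succAbove_subset (i : Fin n) :
    edgesBefore (fun m => f (j.succAbove m)) i ⊆ edgesBefore f (j.succAbove i) := by
  rintro s ⟨m, hmi, rfl⟩
  exact ⟨j.succAbove m, Fin.succAbove_lt_succAbove_iff.mpr hmi, rfl⟩

theorem edgesBefore_subset_insert_succAbove (i : Fin n) :
    edgesBefore f (j.succAbove i) ⊆ insert (f j) (edgesBefore (fun m => f (j.succAbove m)) i) := by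
  rintro s ⟨m, hmi, rfl⟩
  by_cases hmj : m = j
  · exact .inl (congrArg f hmj)
  · obtain ⟨m', rfl⟩ := Fin.exists_succAbove_eq hmj
    exact .inr ⟨m', Fin.succAbove_lt_succAbove_iff.mp hmi, rfl⟩

theorem isReached_succAbove_iff (hu : ∀ m, u ∈ f m → m = j) (huj : u ∈ f j) (huN : u ∉ N)
    (i : Fin n) : IsReached N (fun m => f (j.succAbove m)) i ↔ IsReached N f (j.succAbove i) := by
  have huS : ∀ s ∈ edgesBefore (fun m => f (j.succAbove m)) i, u ∉ s := by
    rintro s ⟨m, -, rfl⟩ hus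
    exact Fin.succAbove_ne j m (hu _ hus)
  refine forall₂_congr fun x hx => exists_congr fun y => and_congr_right fun hy => ?_
  refine ⟨fun h => h.mono (fromEdgeSet_mono (edgesBefore_succAbove_subset i)), fun h => ?_⟩
  refine (reachable_insert_iff_of_forall_not_mem huj huS ?_ ?_).mp
    (h.mono (fromEdgeSet_mono (edgesBefore_subset_insert_succAbove i)))
  · rintro rfl
    exact Fin.succAbove_ne j i (hu _ hx)
  · rintro rfl
    exact huN hy

theorem not_isReached_of_mem (hu : ∀ m, u ∈ f m → m = j) (huj : u ∈ f j) (huN : u ∉ N) :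
    ¬ IsReached N f j := by
  intro h
  obtain ⟨y, hy, hreach⟩ := h u huj
  have huS : ∀ s ∈ edgesBefore f j, u ∉ s := by
    rintro s ⟨m, hmj, rfl⟩ hus
    exact hmj.ne (hu m hus)
  exact huN (eq_of_reachable_of_forall_not_mem huS hreach ▸ hy)

end EdgeOrdering

theorem delete_pendant_edge_alpha_general {V : Type*} [Fintype V]
    (T : SimpleGraph V) (N : Set V)
    (n : ℕ) (σ : Fin (n + 1) ≃ T.edgeSet) (j : Fin (n + 1))
    (u : V) (hu : u ∈ (σ j : Sym2 V)) (huleaf : T.degree u = 1) (huC : u ∉ N) :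
    (∀ i : Fin n,
      (if (∀ x ∈ (σ (j.succAbove i) : Sym2 V), ∃ y ∈ N,
          (SimpleGraph.fromEdgeSet
            {s | ∃ m : Fin n, m < i ∧ (σ (j.succAbove m) : Sym2 V) = s}).Reachable x y)
        then (0 : ℕ) else 1)
      = (if (∀ x ∈ (σ (j.succAbove i) : Sym2 V), ∃ y ∈ N,
          (SimpleGraph.fromEdgeSet
            {s | ∃ m : Fin (n + 1), m < j.succAbove i ∧ (σ m : Sym2 V) = s}).Reachable x y)
        then (0 : ℕ) else 1)) ∧
    (∑ k : Fin (n + 1), if (∀ x ∈ (σ k : Sym2 V), ∃ y ∈ N,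
          (SimpleGraph.fromEdgeSet
            {s | ∃ m : Fin (n + 1), m < k ∧ (σ m : Sym2 V) = s}).Reachable x y)
        then (0 : ℕ) else 1)
      = (∑ i : Fin n, if (∀ x ∈ (σ (j.succAbove i) : Sym2 V), ∃ y ∈ N,
          (SimpleGraph.fromEdgeSet
            {s | ∃ m : Fin n, m < i ∧ (σ (j.succAbove m) : Sym2 V) = s}).Reachable x y)
        then (0 : ℕ) else 1) + 1 := by
  have honly : ∀ m, u ∈ (σ m : Sym2 V) → m = j := fun m hm =>
    σ.injective <| Subtype.ext <|
      T.eq_of_mem_edgeSet_of_degree_eq_one huleaf (σ m).2 (σ j).2 hm hu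
  have hreach := isReached_succAbove_iff (f := fun m => (σ m : Sym2 V)) honly hu huC
  refine ⟨fun i => if_congr (hreach i) rfl rfl, ?_⟩
  rw [Fin.sum_univ_succAbove _ j, add_comm]
  exact congrArg₂ (· + ·) (sum_congr rfl fun i _ => if_congr (hreach i).symm rfl rfl)
    (if_neg (not_isReached_of_mem honly hu huC))

/-- Let `T` be a finite tree with vertex partition `C ⊔ N` (here `C = Nᶜ`), and
let `e = σ j` be an edge of `T` having a leaf endpoint `u ∈ C`.  Let `T' = T - e`
with the induced partition, and give the edges of `T'` the ordering induced by
`σ` (skipping the position `j`).  Then the α-value of every edge other than `e`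
computed in `T` coincides with its α-value computed in `T'`; consequently
`Σ_T α = Σ_{T'} α + 1`.  Here `α(e_k) = 0` iff both endpoints of `e_k` are
reachable from `N` using the earlier edges only. -/
theorem delete_pendant_edge_alpha {V : Type*} [Fintype V]
    (T : SimpleGraph V) (hT : T.IsTree) (N : Set V)
    (n : ℕ) (σ : Fin (n + 1) ≃ T.edgeSet) (j : Fin (n + 1))
    (u : V) (hu : u ∈ (σ j : Sym2 V)) (huleaf : T.degree u = 1) (huC : u ∉ N) :
    (∀ i : Fin n,
      (if (∀ x ∈ (σ (j.succAbove i) : Sym2 V), ∃ y ∈ N,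
          (SimpleGraph.fromEdgeSet
            {s | ∃ m : Fin n, m < i ∧ (σ (j.succAbove m) : Sym2 V) = s}).Reachable x y)
        then (0 : ℕ) else 1)
      = (if (∀ x ∈ (σ (j.succAbove i) : Sym2 V), ∃ y ∈ N,
          (SimpleGraph.fromEdgeSet
            {s | ∃ m : Fin (n + 1), m < j.succAbove i ∧ (σ m : Sym2 V) = s}).Reachable x y)
        then (0 : ℕ) else 1)) ∧
    (∑ k : Fin (n + 1), if (∀ x ∈ (σ k : Sym2 V), ∃ y ∈ N,
          (SimpleGraph.fromEdgeSet
            {s | ∃ m : Fin (n + 1), m < k ∧ (σ m : Sym2 V) = s}).Reachable x y)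
        then (0 : ℕ) else 1)
      = (∑ i : Fin n, if (∀ x ∈ (σ (j.succAbove i) : Sym2 V), ∃ y ∈ N,
          (SimpleGraph.fromEdgeSet
            {s | ∃ m : Fin n, m < i ∧ (σ (j.succAbove m) : Sym2 V) = s}).Reachable x y)
        then (0 : ℕ) else 1) + 1 :=
  delete_pendant_edge_alpha_general T N n σ j u hu huleaf huC
end
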